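/- arXiv:1311.5113 — 3 statements merged into one kernel-verified Lean document; each statement's English description precedes it below -/
import Mathlib

section
/- For any absolutely continuous function x: [α,β] → ℝⁿ with x(α) = 0 and x' ∈ L², it holds that ∫_α^β |x(t)|² dt ≤ (1/2)(β-α)² ∫_α^β |x'(t)|² dt. -/
/-!
By Cauchy–Schwarz, `‖x t‖² = ‖∫_α^t x'‖² ≤ (t - α) ∫_α^t ‖x'‖² ≤ (t - α) ∫_α^β ‖x'‖²`,
and integrating the factor `t - α` over `[α, β]` gives `(β - α)² / 2`.
-/

open MeasureTheory Set

theorem sq_integral_norm_le_measureReal_univ_mul {Ω E : Type*} [MeasurableSpace Ω]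
    {μ : Measure Ω} [IsFiniteMeasure μ] [NormedAddCommGroup E] {f : Ω → E}
    (hf : MemLp f 2 μ) :
    (∫ ω, ‖f ω‖ ∂μ) ^ 2 ≤ μ.real univ * ∫ ω, ‖f ω‖ ^ 2 ∂μ := by
  have holder := integral_mul_norm_le_Lp_mul_Lq (f := fun ω ↦ ‖f ω‖) (g := fun _ ↦ (1 : ℝ))
    Real.HolderConjugate.two_two (by simpa using hf.norm) (by simpa using memLp_const 1)
  simp only [norm_norm, norm_one, mul_one, one_pow, integral_const, smul_eq_mul, Real.rpow_two,
    ← Real.sqrt_eq_rpow] at holder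
  calc (∫ ω, ‖f ω‖ ∂μ) ^ 2
      ≤ (√(∫ ω, ‖f ω‖ ^ 2 ∂μ) * √(μ.real univ)) ^ 2 :=
        pow_le_pow_left₀ (integral_nonneg fun _ ↦ norm_nonneg _) holder 2
    _ = μ.real univ * ∫ ω, ‖f ω‖ ^ 2 ∂μ := by
        rw [mul_pow, Real.sq_sqrt (integral_nonneg fun _ ↦ by positivity),
          Real.sq_sqrt measureReal_nonneg, mul_comm]

section Primitive

variable {E : Type*} [NormedAddCommGroup E] [NormedSpace ℝ E] {f : ℝ → E} {a b : ℝ}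

theorem sq_norm_intervalIntegral_le (hab : a ≤ b) (hf : MemLp f 2 (volume.restrict (Ioc a b))) :
    ‖∫ t in a..b, f t‖ ^ 2 ≤ (b - a) * ∫ t in a..b, ‖f t‖ ^ 2 := by
  have hCS := sq_integral_norm_le_measureReal_univ_mul hf
  rw [measureReal_restrict_apply_univ, Real.volume_real_Ioc_of_le hab] at hCS
  rw [intervalIntegral.integral_of_le hab, intervalIntegral.integral_of_le hab]
  exact (pow_le_pow_left₀ (norm_nonneg _) (norm_integral_le_integral_norm f) 2).trans hCS

theorem integral_sq_norm_primitive_le (hab : a ≤ b) (hf : MemLp f 2 (volume.restrict (Ioc a b))) :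
    ∫ t in a..b, ‖∫ s in a..t, f s‖ ^ 2 ≤ (1 / 2) * (b - a) ^ 2 * ∫ t in a..b, ‖f t‖ ^ 2 := by
  set I := ∫ t in a..b, ‖f t‖ ^ 2
  have hsq : IntervalIntegrable (fun t ↦ ‖f t‖ ^ 2) volume a b :=
    (intervalIntegrable_iff_integrableOn_Ioc_of_le hab).2 (hf.integrable_norm_pow two_ne_zero)
  have pointwise : ∀ t ∈ Icc a b, ‖∫ s in a..t, f s‖ ^ 2 ≤ (t - a) * I := by
    intro t ⟨hat, htb⟩
    calc ‖∫ s in a..t, f s‖ ^ 2 ≤ (t - a) * ∫ s in a..t, ‖f s‖ ^ 2 :=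
          sq_norm_intervalIntegral_le hat
            (hf.mono_measure (Measure.restrict_mono (Ioc_subset_Ioc_right htb) le_rfl))
      _ ≤ (t - a) * I :=
          mul_le_mul_of_nonneg_left (intervalIntegral.integral_mono_interval le_rfl hat htb
            (.of_forall fun _ ↦ sq_nonneg _) hsq) (sub_nonneg.2 hat)
  have hcont : ContinuousOn (fun t ↦ ‖∫ s in a..t, f s‖ ^ 2) (uIcc a b) := by
    have hint : IntegrableOn f (uIcc a b) := by
      rw [uIcc_of_le hab, integrableOn_Icc_iff_integrableOn_Ioc]
      exact hf.integrable one_le_two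
    exact (intervalIntegral.continuousOn_primitive_interval hint).norm.pow 2
  calc ∫ t in a..b, ‖∫ s in a..t, f s‖ ^ 2 ≤ ∫ t in a..b, (t - a) * I :=
        intervalIntegral.integral_mono_on hab hcont.intervalIntegrable
          ((by fun_prop : Continuous fun t ↦ (t - a) * I).intervalIntegrable a b) pointwise
    _ = (1 / 2) * (b - a) ^ 2 * I := by
        rw [intervalIntegral.integral_mul_const,
          intervalIntegral.integral_comp_sub_right (fun t ↦ t), integral_id]
        ring

end Primitive

theorem stmt1_general (n : ℕ) (α β : ℝ) (hαβ : α < β)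
    (x x' : ℝ → EuclideanSpace ℝ (Fin n))
    (hrep : ∀ t ∈ Set.Icc α β, x t = ∫ s in α..t, x' s)
    (hL2 : MeasureTheory.MemLp x' 2 (MeasureTheory.volume.restrict (Set.Icc α β))) :
    ∫ t in α..β, ‖x t‖ ^ 2 ≤ (1 / 2) * (β - α) ^ 2 * ∫ t in α..β, ‖x' t‖ ^ 2 := by
  have hx_eq_primitive : ∫ t in α..β, ‖x t‖ ^ 2 = ∫ t in α..β, ‖∫ s in α..t, x' s‖ ^ 2 :=
    intervalIntegral.integral_congr fun t ht ↦ by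
      rw [hrep t (by rwa [uIcc_of_le hαβ.le] at ht)]
  rw [hx_eq_primitive]
  exact integral_sq_norm_primitive_le hαβ.le
    (hL2.mono_measure (Measure.restrict_mono Ioc_subset_Icc_self le_rfl))

/-- For an absolutely continuous `x : [α,β] → ℝⁿ` with `x α = 0` and
square-integrable derivative `x'`, one has
`∫_α^β |x t|² dt ≤ (1/2)(β-α)² ∫_α^β |x' t|² dt`. -/
theorem stmt1 (n : ℕ) (α β : ℝ) (hαβ : α < β)
    (x x' : ℝ → EuclideanSpace ℝ (Fin n))
    (hrep : ∀ t ∈ Set.Icc α β, x t = ∫ s in α..t, x' s)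
    (hx0 : x α = 0)
    (hL2 : MeasureTheory.MemLp x' 2 (MeasureTheory.volume.restrict (Set.Icc α β))) :
    ∫ t in α..β, ‖x t‖ ^ 2 ≤ (1 / 2) * (β - α) ^ 2 * ∫ t in α..β, ‖x' t‖ ^ 2 :=
  stmt1_general n α β hαβ x x' hrep hL2
end

section
/- Let K: P_Δ → ℝ^{n×n} be measurable and bounded by l, with t-derivative K_t also measurable and bounded by l, such that T maps AC₀² to AC₀². Then for every k ≥ 1 and g ∈ AC₀² with M = sup |g|, one has ‖T^k g‖_{AC₀²} ≤ C·M·l · (l(β-α))^{k-1}/(k-1)!, where C² = (β-α)(1+β-α)² and ‖h‖²_{AC₀²} = ∫_α^β |h'(t)|² dt. -/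
/-!
Each application of `T` gains a factor `l (t - α) / (j + 1)` in the pointwise bound, so
`‖T^j g (t)‖ ≤ M l^j (t - α)^j / j!`. If `h` is continuous with `‖h‖ ≤ B` on `[α, β]`, then
`T h` is Lipschitz there with constant `l B (1 + (β - α))`: in
`T h b - T h a = ∫_α^a (K(b,τ) - K(a,τ)) h(τ) dτ + ∫_a^b K(b,τ) h(τ) dτ`
the first integrand is at most `l (b - a) B` by the mean value inequality for `K_t`, the second
at most `l B`. So `T^k g = T (T^(k-1) g)` has derivative bounded by
`l (1 + (β - α)) M l^(k-1) (β - α)^(k-1) / (k-1)!` inside `(α, β)`, and integrating its square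
gives the estimate.
-/

open MeasureTheory Set

theorem sqrt_integral_norm_sq_le {F : Type*} [NormedAddCommGroup F] {f : ℝ → F} {a b C : ℝ}
    (hab : a ≤ b) (hC : 0 ≤ C) (hf : ∀ t ∈ Ioo a b, ‖f t‖ ≤ C) :
    √(∫ t in a..b, ‖f t‖ ^ 2) ≤ C * √(b - a) := by
  have hint : ∫ t in a..b, ‖f t‖ ^ 2 ≤ C ^ 2 * (b - a) := by
    refine (le_abs_self _).trans ?_
    rw [← Real.norm_eq_abs, ← abs_of_nonneg (sub_nonneg.2 hab)]
    refine intervalIntegral.norm_integral_le_of_norm_le_const_ae ?_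
    filter_upwards [Measure.ae_ne volume b] with t htb ht
    rw [uIoc_of_le hab] at ht
    rw [norm_pow, norm_norm]
    exact pow_le_pow_left₀ (norm_nonneg _) (hf t ⟨ht.1, lt_of_le_of_ne ht.2 htb⟩) 2
  calc √(∫ t in a..b, ‖f t‖ ^ 2) ≤ √(C ^ 2 * (b - a)) := Real.sqrt_le_sqrt hint
    _ = C * √(b - a) := by rw [Real.sqrt_mul (sq_nonneg C), Real.sqrt_sq hC]

variable {E : Type*} [NormedAddCommGroup E] [NormedSpace ℝ E]

noncomputable def volterra (K : ℝ → ℝ → E →L[ℝ] E) (α : ℝ) (h : ℝ → E) (t : ℝ) : E :=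
  ∫ τ in α..t, K t τ (h τ)

theorem integral_sub_pow_div_factorial (α t : ℝ) (j : ℕ) :
    ∫ τ in α..t, (τ - α) ^ j / j.factorial = (t - α) ^ (j + 1) / (j + 1).factorial := by
  rw [intervalIntegral.integral_div, intervalIntegral.integral_comp_sub_right (· ^ j), integral_pow,
    Nat.factorial_succ]
  push_cast
  field_simp
  ring

def NormLeOnTriangle (α β l : ℝ) (K : ℝ → ℝ → E →L[ℝ] E) : Prop :=
  ∀ t τ, α ≤ τ → τ ≤ t → t ≤ β → ‖K t τ‖ ≤ l

section Volterra

variable {K Kt : ℝ → ℝ → E →L[ℝ] E} {α β l : ℝ}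

theorem norm_volterra_le (hK : NormLeOnTriangle α β l K)
    {h : ℝ → E} {φ : ℝ → ℝ} {t : ℝ} (hαt : α ≤ t) (htβ : t ≤ β)
    (hφ : IntervalIntegrable φ volume α t) (hhφ : ∀ τ ∈ Ioc α t, ‖h τ‖ ≤ φ τ) :
    ‖volterra K α h t‖ ≤ l * ∫ τ in α..t, φ τ := by
  rw [← intervalIntegral.integral_const_mul]
  refine intervalIntegral.norm_integral_le_of_norm_le hαt (.of_forall fun τ hτ => ?_)
    (hφ.const_mul l)
  exact (K t τ).le_of_opNorm_le_of_le (hK t τ hτ.1.le hτ.2 htβ) (hhφ τ hτ)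

theorem norm_iterate_volterra_le (hK : NormLeOnTriangle α β l K)
    {g : ℝ → E} {M : ℝ} (hM : ∀ t ∈ Icc α β, ‖g t‖ ≤ M) (j : ℕ) :
    ∀ t ∈ Icc α β, ‖(volterra K α)^[j] g t‖ ≤ M * l ^ j * ((t - α) ^ j / j.factorial) := by
  induction j with
  | zero => simpa using hM
  | succ j ih =>
    intro t ht
    rw [Function.iterate_succ_apply']
    refine (norm_volterra_le hK ht.1 ht.2
      (Continuous.intervalIntegrable (by fun_prop) _ _) fun τ hτ =>
      ih τ ⟨hτ.1.le, hτ.2.trans ht.2⟩).trans_eq ?_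
    rw [intervalIntegral.integral_const_mul, integral_sub_pow_div_factorial]
    ring

theorem norm_kernel_sub_le (hKt : ∀ τ, ∀ t ∈ Icc α β, HasDerivAt (fun s => K s τ) (Kt t τ) t)
    (hKtbd : NormLeOnTriangle α β l Kt) {τ a b : ℝ} (hατ : α ≤ τ)
    (hτa : τ ≤ a) (hab : a ≤ b) (hbβ : b ≤ β) :
    ‖K b τ - K a τ‖ ≤ l * (b - a) :=
  norm_image_sub_le_of_norm_deriv_le_segment'
    (fun x hx => (hKt τ x ⟨hατ.trans (hτa.trans hx.1), hx.2.trans hbβ⟩).hasDerivWithinAt)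
    (fun x hx => hKtbd x τ hατ (hτa.trans hx.1) (hx.2.le.trans hbβ)) b (right_mem_Icc.2 hab)

theorem intervalIntegrable_kernel_apply
    (hKmeas : StronglyMeasurable fun p : ℝ × ℝ => K p.1 p.2)
    (hK : NormLeOnTriangle α β l K) {h : ℝ → E} {B : ℝ}
    (hh : ContinuousOn h (Icc α β)) (hB : ∀ τ ∈ Icc α β, ‖h τ‖ ≤ B) {t a b : ℝ}
    (hαa : α ≤ a) (hab : a ≤ b) (hbt : b ≤ t) (htβ : t ≤ β) :
    IntervalIntegrable (fun τ => K t τ (h τ)) volume a b := by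
  have hsub : Ioc a b ⊆ Icc α β := fun τ hτ => ⟨hαa.trans hτ.1.le, hτ.2.trans (hbt.trans htβ)⟩
  have hKt : AEStronglyMeasurable (fun τ => K t τ) (volume.restrict (Ioc a b)) :=
    (hKmeas.comp_measurable (measurable_const.prodMk measurable_id)).aestronglyMeasurable
  have hht : AEStronglyMeasurable h (volume.restrict (Ioc a b)) :=
    (hh.mono hsub).aestronglyMeasurable measurableSet_Ioc
  rw [intervalIntegrable_iff_integrableOn_Ioc_of_le hab]
  refine (integrableOn_const (C := l * B) measure_Ioc_lt_top.ne).mono'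
    (isBoundedBilinearMap_apply.continuous.comp_aestronglyMeasurable (hKt.prodMk hht)) ?_
  filter_upwards [ae_restrict_mem measurableSet_Ioc] with τ hτ
  exact (K t τ).le_of_opNorm_le_of_le (hK t τ (hsub hτ).1 (hτ.2.trans hbt) htβ) (hB τ (hsub hτ))

theorem norm_volterra_sub_le (hKmeas : StronglyMeasurable fun p : ℝ × ℝ => K p.1 p.2)
    (hK : NormLeOnTriangle α β l K)
    (hKt : ∀ τ, ∀ t ∈ Icc α β, HasDerivAt (fun s => K s τ) (Kt t τ) t)
    (hKtbd : NormLeOnTriangle α β l Kt) {h : ℝ → E} {B : ℝ}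
    (hh : ContinuousOn h (Icc α β)) (hB : ∀ τ ∈ Icc α β, ‖h τ‖ ≤ B) {a b : ℝ}
    (hαa : α ≤ a) (hab : a ≤ b) (hbβ : b ≤ β) :
    ‖volterra K α h b - volterra K α h a‖ ≤ l * B * (1 + (β - α)) * (b - a) := by
  have hl : 0 ≤ l := (norm_nonneg _).trans (hK a α le_rfl hαa (hab.trans hbβ))
  have hB0 : 0 ≤ B := (norm_nonneg _).trans (hB α ⟨le_rfl, hαa.trans (hab.trans hbβ)⟩)
  have hsplit : volterra K α h b - volterra K α h a =
      (∫ τ in α..a, (K b τ - K a τ) (h τ)) + ∫ τ in a..b, K b τ (h τ) := by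
    have hb₁ := intervalIntegrable_kernel_apply hKmeas hK hh hB le_rfl hαa hab hbβ
    have hb₂ := intervalIntegrable_kernel_apply hKmeas hK hh hB hαa hab le_rfl hbβ
    have ha₁ := intervalIntegrable_kernel_apply hKmeas hK hh hB le_rfl hαa le_rfl (hab.trans hbβ)
    simp only [volterra, sub_apply]
    rw [← intervalIntegral.integral_add_adjacent_intervals hb₁ hb₂,
      intervalIntegral.integral_sub hb₁ ha₁]
    abel
  have h₁ : ‖∫ τ in α..a, (K b τ - K a τ) (h τ)‖ ≤ l * (b - a) * B * (a - α) := by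
    refine (intervalIntegral.norm_integral_le_of_norm_le_const fun τ hτ => ?_).trans_eq
      (by rw [abs_of_nonneg (sub_nonneg.2 hαa)])
    rw [uIoc_of_le hαa] at hτ
    exact (K b τ - K a τ).le_of_opNorm_le_of_le
      (norm_kernel_sub_le hKt hKtbd hτ.1.le hτ.2 hab hbβ)
      (hB τ ⟨hτ.1.le, hτ.2.trans (hab.trans hbβ)⟩)
  have h₂ : ‖∫ τ in a..b, K b τ (h τ)‖ ≤ l * B * (b - a) := by
    refine (intervalIntegral.norm_integral_le_of_norm_le_const fun τ hτ => ?_).trans_eq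
      (by rw [abs_of_nonneg (sub_nonneg.2 hab)])
    rw [uIoc_of_le hab] at hτ
    exact (K b τ).le_of_opNorm_le_of_le (hK b τ (hαa.trans hτ.1.le) hτ.2 hbβ)
      (hB τ ⟨hαa.trans hτ.1.le, hτ.2.trans hbβ⟩)
  have ha : a - α ≤ β - α := by linarith
  calc ‖volterra K α h b - volterra K α h a‖
      ≤ l * (b - a) * B * (a - α) + l * B * (b - a) := hsplit ▸ norm_add_le_of_le h₁ h₂
    _ ≤ l * B * (1 + (β - α)) * (b - a) := by
      have : 0 ≤ l * B * (b - a) := mul_nonneg (mul_nonneg hl hB0) (sub_nonneg.2 hab)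
      nlinarith

theorem lipschitzOnWith_volterra (hKmeas : StronglyMeasurable fun p : ℝ × ℝ => K p.1 p.2)
    (hK : NormLeOnTriangle α β l K)
    (hKt : ∀ τ, ∀ t ∈ Icc α β, HasDerivAt (fun s => K s τ) (Kt t τ) t)
    (hKtbd : NormLeOnTriangle α β l Kt) {h : ℝ → E} {B : ℝ}
    (hh : ContinuousOn h (Icc α β)) (hB : ∀ τ ∈ Icc α β, ‖h τ‖ ≤ B) :
    LipschitzOnWith (l * B * (1 + (β - α))).toNNReal (volterra K α h) (Icc α β) := by
  refine LipschitzOnWith.of_dist_le' fun x hx y hy => ?_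
  rw [dist_eq_norm, Real.dist_eq]
  rcases le_total x y with hxy | hyx
  · rw [norm_sub_rev, abs_of_nonpos (sub_nonpos.2 hxy), neg_sub]
    exact norm_volterra_sub_le hKmeas hK hKt hKtbd hh hB hx.1 hxy hy.2
  · rw [abs_of_nonneg (sub_nonneg.2 hyx)]
    exact norm_volterra_sub_le hKmeas hK hKt hKtbd hh hB hy.1 hyx hx.2

theorem norm_iterate_volterra_le_const (hK : NormLeOnTriangle α β l K)
    {g : ℝ → E} {M : ℝ} (hM : ∀ t ∈ Icc α β, ‖g t‖ ≤ M) (j : ℕ) :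
    ∀ t ∈ Icc α β, ‖(volterra K α)^[j] g t‖ ≤ M * l ^ j * ((β - α) ^ j / j.factorial) := by
  intro t ht
  have hαβ : α ≤ β := ht.1.trans ht.2
  have hl : 0 ≤ l := (norm_nonneg _).trans (hK β α le_rfl hαβ le_rfl)
  have hM0 : 0 ≤ M := (norm_nonneg _).trans (hM α ⟨le_rfl, hαβ⟩)
  refine (norm_iterate_volterra_le hK hM j t ht).trans ?_
  gcongr <;> linarith [ht.1, ht.2]

theorem continuousOn_iterate_volterra (hKmeas : StronglyMeasurable fun p : ℝ × ℝ => K p.1 p.2)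
    (hK : NormLeOnTriangle α β l K)
    (hKt : ∀ τ, ∀ t ∈ Icc α β, HasDerivAt (fun s => K s τ) (Kt t τ) t)
    (hKtbd : NormLeOnTriangle α β l Kt) {g : ℝ → E} {M : ℝ}
    (hg : ContinuousOn g (Icc α β)) (hM : ∀ t ∈ Icc α β, ‖g t‖ ≤ M) (j : ℕ) :
    ContinuousOn ((volterra K α)^[j] g) (Icc α β) := by
  induction j with
  | zero => exact hg
  | succ j ih =>
    rw [Function.iterate_succ']
    exact (lipschitzOnWith_volterra hKmeas hK hKt hKtbd ih
      (norm_iterate_volterra_le_const hK hM j)).continuousOn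

end Volterra

theorem stmt5_general (n : ℕ) (α β : ℝ) (hαβ : α < β) (l : ℝ) (hl : 0 < l)
    (K Kt : ℝ → ℝ → (EuclideanSpace ℝ (Fin n) →L[ℝ] EuclideanSpace ℝ (Fin n)))
    (hKmeas : StronglyMeasurable fun p : ℝ × ℝ => K p.1 p.2)
    (hKbd : ∀ t τ, α ≤ τ → τ ≤ t → t ≤ β → ‖K t τ‖ ≤ l ∧ ‖Kt t τ‖ ≤ l)
    (hKt : ∀ τ, ∀ t ∈ Set.Icc α β, HasDerivAt (fun s => K s τ) (Kt t τ) t)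
    (T : (ℝ → EuclideanSpace ℝ (Fin n)) → (ℝ → EuclideanSpace ℝ (Fin n)))
    (hT : ∀ h t, T h t = ∫ τ in α..t, K t τ (h τ))
    -- g ∈ AC₀² with M = sup |g|
    (g g' : ℝ → EuclideanSpace ℝ (Fin n))
    (hg : ∀ t ∈ Set.Icc α β, g t = ∫ s in α..t, g' s)
    (hgL2 : MeasureTheory.MemLp g' 2 (MeasureTheory.volume.restrict (Set.Icc α β)))
    (M : ℝ) (hM : ∀ t ∈ Set.Icc α β, ‖g t‖ ≤ M) :
    ∀ k : ℕ, 1 ≤ k →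
      Real.sqrt (∫ t in α..β, ‖deriv (T^[k] g) t‖ ^ 2) ≤
        Real.sqrt ((β - α) * (1 + (β - α)) ^ 2) * M * l *
          (l * (β - α)) ^ (k - 1) / (Nat.factorial (k - 1)) := by
  intro k hk
  obtain ⟨m, rfl⟩ : ∃ m, k = m + 1 := ⟨k - 1, by omega⟩
  obtain rfl : T = volterra K α := funext fun h => funext (hT h)
  have hK : NormLeOnTriangle α β l K := fun t τ h₁ h₂ h₃ => (hKbd t τ h₁ h₂ h₃).1
  have hKtbd : NormLeOnTriangle α β l Kt := fun t τ h₁ h₂ h₃ => (hKbd t τ h₁ h₂ h₃).2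
  have hM0 : 0 ≤ M := (norm_nonneg _).trans (hM α ⟨le_rfl, hαβ.le⟩)
  have hg_cont : ContinuousOn g (Icc α β) := by
    have := intervalIntegral.continuousOn_primitive_interval (μ := volume) (a := α) (b := β)
      (f := g') (by rw [uIcc_of_le hαβ.le]; exact hgL2.integrable one_le_two)
    rw [uIcc_of_le hαβ.le] at this
    exact this.congr hg
  set C := l * (M * l ^ m * ((β - α) ^ m / m.factorial)) * (1 + (β - α)) with hC_def
  have hC : 0 ≤ C := by have := hαβ.le; positivity
  have hlip := lipschitzOnWith_volterra hKmeas hK hKt hKtbd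
    (continuousOn_iterate_volterra hKmeas hK hKt hKtbd hg_cont hM m)
    (norm_iterate_volterra_le_const hK hM m)
  have hderiv : ∀ t ∈ Ioo α β, ‖deriv ((volterra K α)^[m + 1] g) t‖ ≤ C := fun t ht => by
    rw [Function.iterate_succ_apply']
    exact (norm_deriv_le_of_lipschitzOn (Icc_mem_nhds ht.1 ht.2) hlip).trans_eq
      (Real.coe_toNNReal _ hC)
  calc _ ≤ C * √(β - α) := sqrt_integral_norm_sq_le hαβ.le hC hderiv
    _ = _ := by
      rw [hC_def, Real.sqrt_mul' _ (sq_nonneg _), Real.sqrt_sq (by linarith), Nat.add_sub_cancel,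
        mul_pow]
      ring

/-- for a Volterra kernel `K` bounded by `l` with `t`-derivative `Kt` also
bounded by `l`, such that the Volterra operator `T` maps `AC₀²` into `AC₀²`, the iterates of
`T` applied to `g ∈ AC₀²` with `M = sup |g|` satisfy
`‖T^k g‖_{AC₀²} ≤ C M l (l(β-α))^{k-1}/(k-1)!`, `C² = (β-α)(1+β-α)²`, where
`‖h‖_{AC₀²} = (∫_α^β |h'|²)^{1/2}`. -/
theorem stmt5 (n : ℕ) (α β : ℝ) (hαβ : α < β) (l : ℝ) (hl : 0 < l)
    (K Kt : ℝ → ℝ → (EuclideanSpace ℝ (Fin n) →L[ℝ] EuclideanSpace ℝ (Fin n)))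
    (hKmeas : StronglyMeasurable fun p : ℝ × ℝ => K p.1 p.2)
    (hKtmeas : StronglyMeasurable fun p : ℝ × ℝ => Kt p.1 p.2)
    (hKbd : ∀ t τ, α ≤ τ → τ ≤ t → t ≤ β → ‖K t τ‖ ≤ l ∧ ‖Kt t τ‖ ≤ l)
    (hKt : ∀ τ, ∀ t ∈ Set.Icc α β, HasDerivAt (fun s => K s τ) (Kt t τ) t)
    (T : (ℝ → EuclideanSpace ℝ (Fin n)) → (ℝ → EuclideanSpace ℝ (Fin n)))
    (hT : ∀ h t, T h t = ∫ τ in α..t, K t τ (h τ))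
    -- T maps AC₀² into AC₀²
    (hTmaps : ∀ h h' : ℝ → EuclideanSpace ℝ (Fin n),
      (∀ t ∈ Set.Icc α β, h t = ∫ s in α..t, h' s) →
      MeasureTheory.MemLp h' 2 (MeasureTheory.volume.restrict (Set.Icc α β)) →
      (∀ t ∈ Set.Icc α β, HasDerivAt (T h) (deriv (T h) t) t) ∧
        MeasureTheory.MemLp (deriv (T h)) 2 (MeasureTheory.volume.restrict (Set.Icc α β)))
    -- g ∈ AC₀² with M = sup |g|
    (g g' : ℝ → EuclideanSpace ℝ (Fin n))
    (hg : ∀ t ∈ Set.Icc α β, g t = ∫ s in α..t, g' s)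
    (hgL2 : MeasureTheory.MemLp g' 2 (MeasureTheory.volume.restrict (Set.Icc α β)))
    (M : ℝ) (hM : ∀ t ∈ Set.Icc α β, ‖g t‖ ≤ M) :
    ∀ k : ℕ, 1 ≤ k →
      Real.sqrt (∫ t in α..β, ‖deriv (T^[k] g) t‖ ^ 2) ≤
        Real.sqrt ((β - α) * (1 + (β - α)) ^ 2) * M * l *
          (l * (β - α)) ^ (k - 1) / (Nat.factorial (k - 1)) :=
  stmt5_general n α β hαβ l hl K Kt hKmeas hKbd hKt T hT g g' hg hgL2 M hM
end

section
/- Let X be a real Banach space, H a real Hilbert space, and V: X → H a C¹ operator such that: (a1) for every x ∈ X and g ∈ H, the equation V'(x)h = g has a unique solution h ∈ X; (a2) for every y ∈ H, the functional F_y(x) = (1/2)‖V(x) - y‖²_H satisfies the Palais-Smale condition. Then V is a diffeomorphism: V is a bijection of X onto H and both V and V⁻¹ are Fréchet differentiable. -/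
open Filter

/-- The Palais–Smale condition: every sequence on which `φ` is bounded and whose sequence of
derivatives tends to `0` has a convergent subsequence. -/
def PalaisSmale {X : Type*} [NormedAddCommGroup X] [NormedSpace ℝ X] (φ : X → ℝ) : Prop :=
  ∀ z : ℕ → X, (∃ M : ℝ, ∀ k, |φ (z k)| ≤ M) →
    Tendsto (fun k => ‖fderiv ℝ φ (z k)‖) atTop (nhds 0) →
    ∃ (z₀ : X) (σ : ℕ → ℕ), StrictMono σ ∧ Tendsto (fun k => z (σ k)) atTop (nhds z₀)

/-!
For `y ∈ H` the functional `F_y = ‖V - y‖² / 2` is `C¹` with `F_y'(x) = ⟪V x - y, V'(x) ·⟫`, so,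
`V'(x)` being onto, its critical points are exactly the solutions of `V x = y`. Ekeland's
variational principle and the Palais–Smale condition give a critical point of `F_y`, hence `V` is
onto. If `V a = V b = y` with `a ≠ b`, the local inverse of `V` at `a` makes `F_y` bounded below by
a positive constant on a small sphere around `a`, while `F_y a = F_y b = 0`; the mountain pass
principle then gives a critical point at a positive level, which is absurd. It is proved by
applying Ekeland's principle to the highest value of `F_y` along paths from `a` to `b` and
deforming paths along a pseudo-gradient field. Finally a bijection whose derivatives are all
invertible is an open map, hence a homeomorphism, and its inverse is differentiable by the inverse
function theorem.
-/

open Function Metric Set Topology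

section

variable {E : Type*} [MetricSpace E] {f : E → ℝ} {ε : ℝ}

def ekelandSet (f : E → ℝ) (ε : ℝ) (x : E) : Set E :=
  {z | f z + ε * dist x z ≤ f x}

theorem mem_ekelandSet_self (x : E) : x ∈ ekelandSet f ε x := by
  simp [ekelandSet]

theorem ekelandSet_subset (hε : 0 ≤ ε) {x z : E} (hz : z ∈ ekelandSet f ε x) :
    ekelandSet f ε z ⊆ ekelandSet f ε x := fun w hw => by
  simp only [ekelandSet, mem_ofPred_eq] at hz hw ⊢
  nlinarith [dist_triangle x z w]

theorem isClosed_ekelandSet (hf : LowerSemicontinuous f) (x : E) :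
    IsClosed (ekelandSet f ε x) :=
  (hf.add (continuous_const.mul (continuous_const.dist continuous_id)).lowerSemicontinuous)
    |>.isClosed_preimage (f x)

theorem exists_seq_antitone_ekelandSet (hbdd : BddBelow (range f)) (hε : 0 < ε) (x₀ : E) :
    ∃ u : ℕ → E, u 0 = x₀ ∧ Antitone (fun n => ekelandSet f ε (u n)) ∧
      ∀ n, ∀ z ∈ ekelandSet f ε (u (n + 1)), dist (u (n + 1)) z ≤ (1 / 2) ^ n := by
  have hstep : ∀ (x : E) (n : ℕ), ∃ z ∈ ekelandSet f ε x,
      f z ≤ sInf (f '' ekelandSet f ε x) + ε * (1 / 2) ^ n := fun x n => by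
    obtain ⟨_, ⟨z, hz, rfl⟩, hlt⟩ := Real.lt_sInf_add_pos
      ((nonempty_of_mem (mem_ekelandSet_self x)).image f) (by positivity : 0 < ε * (1 / 2) ^ n)
    exact ⟨z, hz, hlt.le⟩
  choose next next_mem next_le using hstep
  let u : ℕ → E := fun n => Nat.rec x₀ (fun n x => next x n) n
  refine ⟨u, rfl, antitone_nat_of_succ_le fun n => ekelandSet_subset hε.le (next_mem (u n) n),
    fun n z hz => ?_⟩
  -- `u (n + 1)` almost minimises `f` on the larger set `ekelandSet f ε (u n)`
  have hinf : sInf (f '' ekelandSet f ε (u n)) ≤ f z :=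
    csInf_le (hbdd.mono (image_subset_range _ _))
      ⟨z, ekelandSet_subset hε.le (next_mem (u n) n) hz, rfl⟩
  have hz' : f z + ε * dist (u (n + 1)) z ≤ f (u (n + 1)) := hz
  have := next_le (u n) n
  exact le_of_mul_le_mul_left (by linarith) hε

theorem LowerSemicontinuous.exists_le_forall_sub_mul_dist_le [CompleteSpace E]
    (hf : LowerSemicontinuous f) (hbdd : BddBelow (range f)) (hε : 0 < ε) (x₀ : E) :
    ∃ x, f x ≤ f x₀ ∧ ∀ z, f x - ε * dist x z ≤ f z := by
  obtain ⟨u, hu₀, hanti, hdist⟩ := exists_seq_antitone_ekelandSet hbdd hε x₀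
  have mem_of_le : ∀ {n m}, n ≤ m → u m ∈ ekelandSet f ε (u n) := fun hnm =>
    hanti hnm (mem_ekelandSet_self _)
  have hcauchy : CauchySeq u := by
    refine Metric.cauchySeq_iff'.2 fun δ hδ => ?_
    obtain ⟨n, hn⟩ := exists_pow_lt_of_lt_one hδ (by norm_num : (1 / 2 : ℝ) < 1)
    exact ⟨n + 1, fun m hm => by
      rw [dist_comm]; exact (hdist n _ (mem_of_le hm)).trans_lt hn⟩
  obtain ⟨x, hx⟩ := cauchySeq_tendsto_of_complete hcauchy
  have x_mem : ∀ n, x ∈ ekelandSet f ε (u n) := fun n =>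
    (isClosed_ekelandSet hf _).mem_of_tendsto hx ((eventually_ge_atTop n).mono fun _ => mem_of_le)
  refine ⟨x, ?_, fun z => ?_⟩
  · have : f x + ε * dist (u 0) x ≤ f (u 0) := x_mem 0
    rw [hu₀] at this
    nlinarith [dist_nonneg (x := x₀) (y := x)]
  by_cases hz : z ∈ ekelandSet f ε x
  · have hxz : ∀ n, dist x z ≤ 2 * (1 / 2) ^ n := fun n => by
      have h₁ := hdist n x (x_mem (n + 1))
      have h₂ := hdist n z (ekelandSet_subset hε.le (x_mem (n + 1)) hz)
      linarith [dist_triangle_left x z (u (n + 1))]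
    have : dist x z ≤ 0 := ge_of_tendsto'
      (by simpa using (tendsto_pow_atTop_nhds_zero_of_lt_one (by norm_num : (0 : ℝ) ≤ 1 / 2)
        (by norm_num)).const_mul 2) hxz
    rw [dist_le_zero.1 this, dist_self, mul_zero, sub_zero]
  · have : f x < f z + ε * dist x z := not_le.1 hz
    linarith

end

theorem IsCompact.exists_forall_dist_lt_of_continuous {α β : Type*} [PseudoMetricSpace α]
    [PseudoMetricSpace β] {K : Set α} (hK : IsCompact K) {g : α → β} (hg : Continuous g)
    {ε : ℝ} (hε : 0 < ε) : ∃ δ > 0, ∀ k ∈ K, ∀ x, dist k x < δ → dist (g k) (g x) < ε := by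
  obtain ⟨δ, hδ, h⟩ := Metric.mem_uniformity_dist.1 <|
    hK.uniformContinuousAt_of_continuousAt g (fun _ _ => hg.continuousAt) (dist_mem_uniformity hε)
  exact ⟨δ, hδ, fun k hk x hx => h hx hk⟩

section

variable {E : Type*} [TopologicalSpace E]

noncomputable def pathMax (f : E → ℝ) (γ : C(unitInterval, E)) : ℝ :=
  ⨆ t, f (γ t)

theorem le_pathMax {f : E → ℝ} (hf : Continuous f) (γ : C(unitInterval, E)) (t : unitInterval) :
    f (γ t) ≤ pathMax f γ :=
  le_ciSup (isCompact_range (hf.comp γ.continuous)).bddAbove t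

theorem pathMax_le {f : E → ℝ} {γ : C(unitInterval, E)} {c : ℝ} (h : ∀ t, f (γ t) ≤ c) :
    pathMax f γ ≤ c :=
  ciSup_le h

theorem lowerSemicontinuous_pathMax {f : E → ℝ} (hf : Continuous f) :
    LowerSemicontinuous (pathMax f) :=
  lowerSemicontinuous_ciSup (fun γ => (isCompact_range (hf.comp γ.continuous)).bddAbove)
    fun t => (hf.comp (continuous_eval_const t)).lowerSemicontinuous

end

section

variable {E : Type*} [NormedAddCommGroup E] [NormedSpace ℝ E]

theorem ContinuousLinearMap.exists_apply_lt_neg_of_lt_opNorm (L : StrongDual ℝ E) {r : ℝ}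
    (hr : r < ‖L‖) :
    ∃ v : E, ‖v‖ < 1 ∧ L v < -r := by
  obtain ⟨v, hv, hrv⟩ := L.exists_lt_apply_of_lt_opNorm hr
  rcases lt_abs.1 (Real.norm_eq_abs (L v) ▸ hrv) with h | h
  · exact ⟨-v, by rwa [norm_neg], by rw [map_neg]; linarith⟩
  · exact ⟨v, hv, by linarith⟩

theorem ContinuousLinearMap.exists_forall_apply_lt_neg_of_norm_sub_lt (L : StrongDual ℝ E)
    {r ε : ℝ} (h : r + ε < ‖L‖) :
    ∃ v : E, ‖v‖ < 1 ∧ ∀ L' : StrongDual ℝ E, ‖L - L'‖ < ε → L' v < -r := by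
  obtain ⟨v, hv, hLv⟩ := L.exists_apply_lt_neg_of_lt_opNorm h
  refine ⟨v, hv, fun L' hL' => ?_⟩
  have hdiff : |(L - L') v| < ε := by
    rw [← Real.norm_eq_abs]
    exact ((L - L').le_opNorm v).trans_lt
      (by nlinarith [norm_nonneg (L - L'), norm_nonneg v])
  rw [sub_apply, abs_sub_lt_iff] at hdiff
  linarith

theorem norm_fderiv_le_of_forall_sub_mul_dist_le {f : E → ℝ} {x : E} (hf : DifferentiableAt ℝ f x)
    {ε : ℝ} (hε : 0 ≤ ε) (hmin : ∀ z, f x - ε * dist x z ≤ f z) : ‖fderiv ℝ f x‖ ≤ ε := by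
  by_contra! hlt
  obtain ⟨v, hv, hfv⟩ := (fderiv ℝ f x).exists_apply_lt_neg_of_lt_opNorm hlt
  set g : ℝ → ℝ := fun t => f (x + t • v) + ε * ‖v‖ * t
  have hg : HasDerivAt g (fderiv ℝ f x v + ε * ‖v‖) 0 := by
    have hline : HasDerivAt (fun t : ℝ => x + t • v) v 0 := by
      simpa using ((hasDerivAt_id (0 : ℝ)).smul_const v).const_add x
    have hfx : HasFDerivAt f (fderiv ℝ f x) (x + (0 : ℝ) • v) := by simpa using hf.hasFDerivAt
    simpa using (hfx.comp_hasDerivAt 0 hline).fun_add ((hasDerivAt_id (0 : ℝ)).const_mul (ε * ‖v‖))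
  -- along the ray `x + t • v`, `t ≥ 0`, the Ekeland inequality makes `0` a minimum of `g`
  have hgmin : IsLocalMinOn g (Ici 0) 0 := IsMinOn.localize fun t (ht : 0 ≤ t) => by
    have := hmin (x + t • v)
    simp only [dist_self_add_right, norm_smul, Real.norm_eq_abs, abs_of_nonneg ht] at this
    simp only [g, mem_ofPred_eq, zero_smul, add_zero, mul_zero]
    nlinarith
  have hseg : segment ℝ (0 : ℝ) (0 + 1) ⊆ Ici 0 := by
    rw [segment_eq_Icc (by norm_num)]; exact Icc_subset_Ici_self
  have := hgmin.hasFDerivWithinAt_nonneg hg.hasFDerivAt.hasFDerivWithinAt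
    (mem_posTangentConeAt_of_segment_subset hseg)
  rw [ContinuousLinearMap.toSpanSingleton_apply, one_smul] at this
  nlinarith [mul_le_mul_of_nonneg_left hv.le hε]

theorem PalaisSmale.exists_fderiv_eq_zero_of_forall_exists {f : E → ℝ} (hps : PalaisSmale f)
    (hf : Continuous f) (hf' : Continuous (fderiv ℝ f)) {lo hi : ℝ}
    (h : ∀ ε > 0, ∃ u, f u ∈ Icc lo hi ∧ ‖fderiv ℝ f u‖ ≤ ε) :
    ∃ x, f x ∈ Icc lo hi ∧ fderiv ℝ f x = 0 := by
  choose u hu_mem hu_le using fun n : ℕ => h (1 / (n + 1)) Nat.one_div_pos_of_nat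
  have hu : Tendsto (fun n => ‖fderiv ℝ f (u n)‖) atTop (𝓝 0) :=
    squeeze_zero (fun _ => norm_nonneg _) hu_le tendsto_one_div_add_atTop_nhds_zero_nat
  obtain ⟨x, σ, hσ, hx⟩ :=
    hps u ⟨max |lo| |hi|, fun n => abs_le_max_abs_abs (hu_mem n).1 (hu_mem n).2⟩ hu
  refine ⟨x, (isClosed_Icc.preimage hf).mem_of_tendsto hx (.of_forall fun n => hu_mem (σ n)), ?_⟩
  exact norm_eq_zero.1 <| tendsto_nhds_unique
    ((continuous_norm.comp hf').continuousAt.tendsto.comp hx) (hu.comp hσ.tendsto_atTop)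

theorem PalaisSmale.exists_fderiv_eq_zero_of_bddBelow [CompleteSpace E] {f : E → ℝ}
    (hps : PalaisSmale f) (hf : ContDiff ℝ 1 f) (hbdd : BddBelow (range f)) :
    ∃ x, fderiv ℝ f x = 0 := by
  obtain ⟨m, hm⟩ := hbdd
  obtain ⟨x, -, hx⟩ := hps.exists_fderiv_eq_zero_of_forall_exists hf.continuous
    (hf.continuous_fderiv one_ne_zero) (lo := m) (hi := f 0) fun ε hε => by
      obtain ⟨u, hu, hmin⟩ :=
        hf.continuous.lowerSemicontinuous.exists_le_forall_sub_mul_dist_le ⟨m, hm⟩ hε 0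
      exact ⟨u, ⟨hm (mem_range_self u), hu⟩,
        norm_fderiv_le_of_forall_sub_mul_dist_le (hf.differentiable one_ne_zero u) hε.le hmin⟩
  exact ⟨x, hx⟩

theorem apply_add_smul_le_of_forall_fderiv_apply_le {f : E → ℝ} (hf : Differentiable ℝ f)
    {p v : E} {c δ h : ℝ} (hh : 0 ≤ h) (hv : h * ‖v‖ < δ)
    (hd : ∀ x ∈ ball p δ, fderiv ℝ f x v ≤ c) : f (p + h • v) ≤ f p + c * h := by
  set g : ℝ → ℝ := fun τ => f (p + τ • v)
  have hg : ∀ τ, HasDerivAt g (fderiv ℝ f (p + τ • v) v) τ := fun τ => by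
    have hline : HasDerivAt (fun τ : ℝ => p + τ • v) v τ := by
      simpa using ((hasDerivAt_id τ).smul_const v).const_add p
    exact (hf _).hasFDerivAt.comp_hasDerivAt τ hline
  have hmv := (convex_Icc 0 h).image_sub_le_mul_sub_of_deriv_le (f := g) (C := c)
    (continuous_iff_continuousAt.2 fun τ => (hg τ).continuousAt).continuousOn
    (fun τ _ => (hg τ).differentiableAt.differentiableWithinAt) (fun τ hτ => ?_)
    0 ⟨le_rfl, hh⟩ h ⟨hh, le_rfl⟩ hh
  · simp only [g, zero_smul, add_zero, sub_zero] at hmv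
    linarith
  rw [interior_Icc] at hτ
  rw [(hg τ).deriv]
  refine hd _ ?_
  rw [mem_ball, dist_self_add_left, norm_smul, Real.norm_eq_abs, abs_of_pos hτ.1]
  exact lt_of_le_of_lt (mul_le_mul_of_nonneg_right hτ.2.le (norm_nonneg v)) hv

theorem exists_descent_field_along_path {f : E → ℝ} (hf : Continuous f)
    (hf' : Continuous (fderiv ℝ f)) {γ : C(unitInterval, E)} {β ε : ℝ} (hε : 0 < ε)
    (h0 : f (γ 0) < β) (h1 : f (γ 1) < β)
    (hγ : ∀ t, β ≤ f (γ t) → 3 * ε < ‖fderiv ℝ f (γ t)‖) :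
    ∃ δ > 0, ∃ w : C(unitInterval, E), w 0 = 0 ∧ w 1 = 0 ∧ ∀ s, ‖w s‖ ≤ 1 ∧ ∀ x ∈ ball (γ s) δ,
      fderiv ℝ f x (w s) ≤ 0 ∧ (β ≤ f (γ s) → fderiv ℝ f x (w s) ≤ -(2 * ε)) := by
  obtain ⟨δ, hδ, hunif⟩ :=
    (isCompact_range γ.continuous).exists_forall_dist_lt_of_continuous hf' hε
  -- the admissible directions at `s` form a convex set, so local choices glue along `γ`
  set t : unitInterval → Set E := fun s => {v | ‖v‖ ≤ 1 ∧ (s = 0 ∨ s = 1 → v = 0) ∧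
    ∀ x ∈ ball (γ s) (δ / 2),
      fderiv ℝ f x v ≤ 0 ∧ (β ≤ f (γ s) → fderiv ℝ f x v ≤ -(2 * ε))}
  have ht : ∀ s, Convex ℝ (t s) := by
    rintro s v₁ ⟨hn₁, he₁, hd₁⟩ v₂ ⟨hn₂, he₂, hd₂⟩ a b ha hb hab
    refine ⟨?_, fun hs => by simp [he₁ hs, he₂ hs], fun x hx => ?_⟩
    · simpa using convex_closedBall (0 : E) 1 (by simpa using hn₁) (by simpa using hn₂) ha hb hab
    · obtain ⟨hle₁, hlt₁⟩ := hd₁ x hx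
      obtain ⟨hle₂, hlt₂⟩ := hd₂ x hx
      simp only [map_add, map_smul, smul_eq_mul]
      exact ⟨by nlinarith, fun hs => by nlinarith [hlt₁ hs, hlt₂ hs]⟩
  have hloc : ∀ s₀, ∃ v, ∀ᶠ s in 𝓝 s₀, v ∈ t s := by
    intro s₀
    by_cases hs₀ : β ≤ f (γ s₀)
    · obtain ⟨v, hv, hfv⟩ := (fderiv ℝ f (γ s₀)).exists_forall_apply_lt_neg_of_norm_sub_lt
        (by linarith [hγ s₀ hs₀] : 2 * ε + ε < _)
      have hne₀ : s₀ ≠ 0 := by rintro rfl; linarith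
      have hne₁ : s₀ ≠ 1 := by rintro rfl; linarith
      refine ⟨v, ?_⟩
      filter_upwards [eventually_ne_nhds hne₀, eventually_ne_nhds hne₁,
        γ.continuous.continuousAt (ball_mem_nhds (γ s₀) (half_pos hδ))] with s hs0 hs1 hsδ
      refine ⟨hv.le, fun hs => (hs.elim hs0 hs1).elim, fun x hx => ?_⟩
      have hx₀ : dist (γ s₀) x < δ := by
        rw [mem_ball] at hx
        rw [mem_preimage, mem_ball] at hsδ
        linarith [dist_triangle_left (γ s₀) x (γ s), dist_comm x (γ s)]
      have hclose := hunif _ (mem_range_self s₀) x hx₀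
      rw [dist_eq_norm] at hclose
      have := hfv _ hclose
      exact ⟨by linarith, fun _ => this.le⟩
    · refine ⟨0, ?_⟩
      filter_upwards [(isOpen_lt (hf.comp γ.continuous) continuous_const).mem_nhds
        (not_le.1 hs₀)] with s hs
      exact ⟨by simp, fun _ => rfl, fun x _ => ⟨by simp, fun h => absurd h (not_le.2 hs)⟩⟩
  obtain ⟨w, hw⟩ := exists_continuous_forall_mem_convex_of_local_const ht hloc
  exact ⟨δ / 2, half_pos hδ, w, (hw 0).2.1 (Or.inl rfl), (hw 1).2.1 (Or.inr rfl),
    fun s => ⟨(hw s).1, (hw s).2.2⟩⟩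

theorem exists_path_deformation {f : E → ℝ} (hf : ContDiff ℝ 1 f) {γ : C(unitInterval, E)}
    {β ε : ℝ} (hε : 0 < ε) (h0 : f (γ 0) < β) (h1 : f (γ 1) < β)
    (hγ : ∀ t, β ≤ f (γ t) → 3 * ε < ‖fderiv ℝ f (γ t)‖) {h₀ : ℝ} (hh₀ : 0 < h₀) :
    ∃ h ∈ Ioc 0 h₀, ∃ η : C(unitInterval, E), η 0 = γ 0 ∧ η 1 = γ 1 ∧ dist γ η ≤ h ∧
      ∀ t, f (η t) ≤ f (γ t) ∧ (β ≤ f (γ t) → f (η t) ≤ f (γ t) - 2 * ε * h) := by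
  obtain ⟨δ, hδ, w, hw0, hw1, hw⟩ := exists_descent_field_along_path hf.continuous
    (hf.continuous_fderiv one_ne_zero) hε h0 h1 hγ
  set h := min h₀ (δ / 2)
  have hh : 0 < h := lt_min hh₀ (half_pos hδ)
  have hwδ : ∀ s, h * ‖w s‖ < δ := fun s => calc
    h * ‖w s‖ ≤ h * 1 := mul_le_mul_of_nonneg_left (hw s).1 hh.le
    _ ≤ δ / 2 := by rw [mul_one]; exact min_le_right _ _
    _ < δ := half_lt_self hδ
  have hdesc := fun s {c : ℝ} (hc : ∀ x ∈ ball (γ s) δ, fderiv ℝ f x (w s) ≤ c) =>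
    apply_add_smul_le_of_forall_fderiv_apply_le (hf.differentiable one_ne_zero) hh.le (hwδ s) hc
  refine ⟨h, ⟨hh, min_le_left _ _⟩, γ + h • w, by simp [hw0], by simp [hw1], ?_, fun t => ?_⟩
  · refine (ContinuousMap.dist_le hh.le).2 fun s => ?_
    simpa [dist_eq_norm, norm_smul, abs_of_pos hh] using
      mul_le_of_le_one_right hh.le (hw s).1
  · have hle := hdesc t fun x hx => ((hw t).2 x hx).1
    simp only [ContinuousMap.add_apply, ContinuousMap.coe_smul, Pi.smul_apply, zero_mul,
      add_zero] at hle ⊢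
    refine ⟨hle, fun ht => ?_⟩
    have := hdesc t fun x hx => ((hw t).2 x hx).2 ht
    linarith

theorem exists_norm_fderiv_le_of_pathMax_sub_mul_dist_le {f : E → ℝ}
    (hf : ContDiff ℝ 1 f) {γ : C(unitInterval, E)} {α β ε : ℝ} (hε : 0 < ε) (hβα : β < α)
    (hα : α ≤ pathMax f γ) (h0 : f (γ 0) < β) (h1 : f (γ 1) < β)
    (hmin : ∀ η : C(unitInterval, E), η 0 = γ 0 → η 1 = γ 1 →
      pathMax f γ - ε * dist γ η ≤ pathMax f η) :
    ∃ t, β ≤ f (γ t) ∧ ‖fderiv ℝ f (γ t)‖ ≤ 3 * ε := by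
  -- otherwise a deformation of `γ` by at most `h` lowers its maximum by `2 * ε * h`
  by_contra! hγ
  obtain ⟨h, ⟨hh, hhα⟩, η, hη0, hη1, hdist, hdesc⟩ :=
    exists_path_deformation hf hε h0 h1 hγ (h₀ := (α - β) / (2 * ε)) (by
      have := sub_pos.2 hβα; positivity)
  have hup : pathMax f η ≤ max (pathMax f γ - 2 * ε * h) β := pathMax_le fun t => by
    by_cases ht : β ≤ f (γ t)
    · exact le_max_of_le_left <| ((hdesc t).2 ht).trans (by linarith [le_pathMax hf.continuous γ t])
    · exact le_max_of_le_right <| ((hdesc t).1.trans (not_le.1 ht).le)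
  have hlow : pathMax f γ - ε * h ≤ pathMax f η :=
    le_trans (by nlinarith) (hmin η hη0 hη1)
  have hεh : ε * h ≤ (α - β) / 2 := by
    rw [le_div_iff₀ (by positivity : (0 : ℝ) < 2 * ε)] at hhα; linarith
  rcases le_max_iff.1 (hlow.trans hup) with h' | h' <;> nlinarith

theorem PalaisSmale.exists_fderiv_eq_zero_of_mountainPass [CompleteSpace E] {f : E → ℝ}
    (hps : PalaisSmale f) (hf : ContDiff ℝ 1 f) {a b : E} {α : ℝ} (ha : f a < α) (hb : f b < α)
    (hsep : ∀ γ : C(unitInterval, E), γ 0 = a → γ 1 = b → ∃ t, α ≤ f (γ t)) :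
    ∃ x, max (f a) (f b) < f x ∧ fderiv ℝ f x = 0 := by
  obtain ⟨β, hβ, hβα⟩ := exists_between (max_lt ha hb)
  set P : Set C(unitInterval, E) := {γ | γ 0 = a ∧ γ 1 = b}
  have : CompleteSpace P := IsClosed.completeSpace_coe (hs :=
    (isClosed_eq (continuous_eval_const 0) continuous_const).inter
      (isClosed_eq (continuous_eval_const 1) continuous_const))
  let γ₀ : P := ⟨⟨fun t => a + (t : ℝ) • (b - a), by fun_prop⟩, by simp, by simp⟩
  have hbdd : BddBelow (range fun γ : P => pathMax f γ) := ⟨f a, by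
    rintro _ ⟨γ, rfl⟩
    simpa [γ.2.1] using le_pathMax hf.continuous γ.1 0⟩
  obtain ⟨x, hx, hx0⟩ := hps.exists_fderiv_eq_zero_of_forall_exists hf.continuous
    (hf.continuous_fderiv one_ne_zero) (lo := β) (hi := pathMax f γ₀) fun ε hε => by
      have hε3 : 0 < ε / 3 := by positivity
      obtain ⟨γ, hγ_le, hγ_min⟩ := ((lowerSemicontinuous_pathMax hf.continuous).comp
        continuous_subtype_val).exists_le_forall_sub_mul_dist_le hbdd hε3 γ₀
      obtain ⟨t₀, ht₀⟩ := hsep γ γ.2.1 γ.2.2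
      obtain ⟨t, ht, hft⟩ := exists_norm_fderiv_le_of_pathMax_sub_mul_dist_le hf hε3 hβα
        (ht₀.trans (le_pathMax hf.continuous γ t₀)) (γ.2.1 ▸ (le_max_left _ _).trans_lt hβ)
        (γ.2.2 ▸ (le_max_right _ _).trans_lt hβ)
        fun η h0 h1 => hγ_min ⟨η, h0.trans γ.2.1, h1.trans γ.2.2⟩
      exact ⟨γ.1 t, ⟨ht, (le_pathMax hf.continuous _ t).trans hγ_le⟩, hft.trans (by linarith)⟩
  exact ⟨x, hβ.trans_le hx.1, hx0⟩

end

theorem HasStrictFDerivAt.exists_forall_dist_eq_le_dist {𝕜 E F : Type*}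
    [NontriviallyNormedField 𝕜] [NormedAddCommGroup E] [NormedSpace 𝕜 E] [CompleteSpace E]
    [NormedAddCommGroup F] [NormedSpace 𝕜 F] {f : E → F} {f' : E ≃L[𝕜] F} {a : E}
    (hf : HasStrictFDerivAt f (f' : E →L[𝕜] F) a) {R : ℝ} (hR : 0 < R) :
    ∃ r ∈ Ioo 0 R, ∃ ρ > 0, ∀ x, dist x a = r → ρ ≤ dist (f x) (f a) := by
  set P := hf.toOpenPartialHomeomorph f
  obtain ⟨r₀, hr₀, hball⟩ :=
    Metric.isOpen_iff.1 P.open_source a hf.mem_toOpenPartialHomeomorph_source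
  set r := min (r₀ / 2) (R / 2)
  have hr : 0 < r := lt_min (half_pos hr₀) (half_pos hR)
  obtain ⟨ρ, hρ, hinv⟩ := Metric.continuousAt_iff.1 hf.localInverse_continuousAt r hr
  refine ⟨r, ⟨hr, (min_le_right _ _).trans_lt (half_lt_self hR)⟩, ρ, hρ, fun x hx => ?_⟩
  by_contra! hlt
  have hsrc : x ∈ P.source :=
    hball (by rw [mem_ball, hx]; exact (min_le_left _ _).trans_lt (half_lt_self hr₀))
  have := hinv hlt
  rw [hf.localInverse_apply_image, show hf.localInverse f _ a (f x) = x from P.left_inv hsrc,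
    hx] at this
  exact lt_irrefl r this

theorem exists_differentiable_inverse_of_bijective {𝕜 E F : Type*} [NontriviallyNormedField 𝕜]
    [NormedAddCommGroup E] [NormedSpace 𝕜 E] [CompleteSpace E] [NormedAddCommGroup F]
    [NormedSpace 𝕜 F] {f : E → F} {f' : E → E ≃L[𝕜] F}
    (hf : ∀ x, HasStrictFDerivAt f (f' x : E →L[𝕜] F) x) (hbij : Bijective f) :
    ∃ g : F → E, LeftInverse g f ∧ RightInverse g f ∧ Differentiable 𝕜 g := by
  let e := (Equiv.ofBijective f hbij).toHomeomorphOfContinuousOpen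
    (continuous_iff_continuousAt.2 fun x => (hf x).continuousAt)
    (isOpenMap_of_hasStrictFDerivAt_equiv hf)
  refine ⟨e.symm, e.left_inv, e.right_inv, fun y => ?_⟩
  exact ((hf (e.symm y)).hasFDerivAt.of_local_left_inverse e.symm.continuous.continuousAt
    (.of_forall e.right_inv)).differentiableAt

section

variable {X H : Type*} [NormedAddCommGroup X] [NormedSpace ℝ X]
  [NormedAddCommGroup H] [InnerProductSpace ℝ H]

theorem HasFDerivAt.half_norm_sub_sq {V : X → H} {V' : X →L[ℝ] H} {x : X} (hV : HasFDerivAt V V' x)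
    (y : H) :
    HasFDerivAt (fun x => (1 / 2) * ‖V x - y‖ ^ 2) ((innerSL ℝ (V x - y)).comp V') x := by
  refine (((hV.sub_const y).norm_sq).const_mul (1 / 2 : ℝ)).congr_fderiv ?_
  ext v
  simp

theorem eq_of_fderiv_half_norm_sub_sq_eq_zero {V : X → H} {x : X} {y : H}
    (hV : DifferentiableAt ℝ V x) (hsurj : Surjective (fderiv ℝ V x))
    (h : fderiv ℝ (fun x => (1 / 2) * ‖V x - y‖ ^ 2) x = 0) : V x = y := by
  obtain ⟨v, hv⟩ := hsurj (V x - y)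
  have := congrArg (· v) ((hV.hasFDerivAt.half_norm_sub_sq y).fderiv.symm.trans h)
  simp only [ContinuousLinearMap.coe_comp, comp_apply, innerSL_apply_apply, hv,
    zero_apply, inner_self_eq_zero] at this
  exact sub_eq_zero.1 this

theorem surjective_of_palaisSmale [CompleteSpace X] {V : X → H} (hV : ContDiff ℝ 1 V)
    (hV' : ∀ x, Surjective (fderiv ℝ V x))
    (hps : ∀ y, PalaisSmale fun x => (1 / 2) * ‖V x - y‖ ^ 2) : Surjective V := fun y => by
  obtain ⟨x, hx⟩ := (hps y).exists_fderiv_eq_zero_of_bddBelow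
    (contDiff_const.mul ((hV.sub contDiff_const).norm_sq ℝ)) ⟨0, by rintro _ ⟨x, rfl⟩; positivity⟩
  exact ⟨x, eq_of_fderiv_half_norm_sub_sq_eq_zero (hV.differentiable one_ne_zero x) (hV' x) hx⟩

theorem injective_of_palaisSmale [CompleteSpace X] {V : X → H} (hV : ContDiff ℝ 1 V)
    {V' : X → X ≃L[ℝ] H} (hV' : ∀ x, HasStrictFDerivAt V (V' x : X →L[ℝ] H) x)
    (hps : ∀ y, PalaisSmale fun x => (1 / 2) * ‖V x - y‖ ^ 2) : Injective V := by
  intro a b hab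
  by_contra hne
  obtain ⟨r, ⟨hr, hrab⟩, ρ, hρ, hsphere⟩ := (hV' a).exists_forall_dist_eq_le_dist (dist_pos.2 hne)
  obtain ⟨x, hx, hx0⟩ := (hps (V a)).exists_fderiv_eq_zero_of_mountainPass
    (contDiff_const.mul ((hV.sub contDiff_const).norm_sq ℝ)) (a := a) (b := b) (α := ρ ^ 2 / 2)
    (by norm_num; positivity) (by norm_num [← hab]; positivity) fun γ h0 h1 => by
      obtain ⟨t, ht⟩ := intermediate_value_univ 0 1 (γ.continuous.dist continuous_const)
        (show r ∈ Icc (dist (γ 0) a) (dist (γ 1) a) by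
          rw [h0, h1, dist_self, dist_comm]; exact ⟨hr.le, hrab.le⟩)
      refine ⟨t, ?_⟩
      have := hsphere (γ t) ht
      rw [dist_eq_norm] at this
      nlinarith
  have hVx := eq_of_fderiv_half_norm_sub_sq_eq_zero (hV.differentiable one_ne_zero x)
    ((hV' x).hasFDerivAt.fderiv ▸ (V' x).surjective) hx0
  simp [hVx, hab] at hx

end

/-- let `X` be a real Banach space, `H` a real Hilbert space, `V : X → H` of
class `C¹` such that (a1) for every `x`, `V'(x)h = g` has a unique solution `h` for every
`g`, and (a2) for every `y ∈ H` the functional `F_y(x) = (1/2)‖V(x) - y‖²` satisfies the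
Palais–Smale condition.  Then `V` is a diffeomorphism: a differentiable bijection of `X`
onto `H` with differentiable inverse. -/
theorem stmt11 {X H : Type*}
    [NormedAddCommGroup X] [NormedSpace ℝ X] [CompleteSpace X]
    [NormedAddCommGroup H] [InnerProductSpace ℝ H] [CompleteSpace H]
    (V : X → H) (hV : ContDiff ℝ 1 V)
    (ha1 : ∀ (x : X) (g : H), ∃! h : X, fderiv ℝ V x h = g)
    (ha2 : ∀ y : H, PalaisSmale fun x : X => (1 / 2) * ‖V x - y‖ ^ 2) :
    Function.Bijective V ∧ Differentiable ℝ V ∧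
      ∃ W : H → X, Function.LeftInverse W V ∧ Function.RightInverse W V ∧
        Differentiable ℝ W := by
  have hV'bij : ∀ x, Bijective (fderiv ℝ V x) := fun x => (bijective_iff_existsUnique _).2 (ha1 x)
  let V' x : X ≃L[ℝ] H := .ofBijective (fderiv ℝ V x)
    (LinearMap.ker_eq_bot.2 (hV'bij x).1) (LinearMap.range_eq_top.2 (hV'bij x).2)
  have hV' : ∀ x, HasStrictFDerivAt V (V' x : X →L[ℝ] H) x := fun x => by
    rw [ContinuousLinearEquiv.coe_ofBijective]
    exact hV.contDiffAt.hasStrictFDerivAt one_ne_zero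
  have hVbij : Bijective V :=
    ⟨injective_of_palaisSmale hV hV' ha2, surjective_of_palaisSmale hV (fun x => (hV'bij x).2) ha2⟩
  exact ⟨hVbij, hV.differentiable one_ne_zero, exists_differentiable_inverse_of_bijective hV' hVbij⟩
end
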